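/- Let |ψ⟩ be an n-qubit pure state with |⟨ψ|0⟩^n|² = 1 - ε². Then the multipartite concurrence C(|ψ⟩) = 2√(1 - ⟨ψ|^⊗2 P₁⊗⋯⊗Pₙ |ψ⟩^⊗2), where Pᵢ is the projector onto the symmetric subspace of the two copies of qubit i, satisfies C(|ψ⟩)² ≤ 16·(2n)·ε (i.e., C(|ψ⟩)² = O(nε)), using that C(|0⟩^n) = 0 and ‖P₁⊗⋯⊗Pₙ‖_∞ = 1. -/

import Mathlib

noncomputable section

open scoped BigOperators ComplexOrder
open Matrix

/-- Singular values of a matrix: square roots of eigenvalues of `Aᴴ * A`. -/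
def singVals {m n : Type*} [Fintype m] [Fintype n] [DecidableEq n]
    (A : Matrix m n ℂ) (i : n) : ℝ :=
  Real.sqrt ((Matrix.posSemidef_conjTranspose_mul_self A).1.eigenvalues i)

/-- Trace norm: sum of singular values. -/
def traceNorm {m n : Type*} [Fintype m] [Fintype n] [DecidableEq n]
    (A : Matrix m n ℂ) : ℝ := ∑ i, singVals A i

/-- Operator norm: largest singular value. -/
def opNorm {m n : Type*} [Fintype m] [Fintype n] [DecidableEq n]
    (A : Matrix m n ℂ) : ℝ := ⨆ i, singVals A i

/-- Trace distance between two operators. -/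
def tdist {n : Type*} [Fintype n] [DecidableEq n] (ρ σ : Matrix n n ℂ) : ℝ :=
  traceNorm (ρ - σ) / 2

/-- Rank-one projector `|ψ⟩⟨ψ|` associated to a vector. -/
def projOp {n : Type*} [Fintype n] (ψ : n → ℂ) : Matrix n n ℂ :=
  Matrix.vecMulVec ψ (star ψ)

/-- Von Neumann entropy (base 2) via eigenvalues of a Hermitian matrix. -/
def vnEntropy {n : Type*} [Fintype n] [DecidableEq n] {ρ : Matrix n n ℂ}
    (h : ρ.IsHermitian) : ℝ :=
  -∑ i, h.eigenvalues i * Real.logb 2 (h.eigenvalues i)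

/-- k-fold tensor power of a vector. -/
def tensPow {d : Type*} [Fintype d] (k : ℕ) (ψ : d → ℂ) : (Fin k → d) → ℂ :=
  fun x => ∏ t, ψ (x t)

/-- Projector onto the symmetric subspace of `ℂ² ⊗ ℂ²`. -/
def symProj : Matrix (Fin 2 × Fin 2) (Fin 2 × Fin 2) ℂ :=
  Matrix.of fun p q => (1 / 2 : ℂ) *
    ((if p.1 = q.1 ∧ p.2 = q.2 then 1 else 0) + (if p.1 = q.2 ∧ p.2 = q.1 then 1 else 0))

/-- The operator `P₁ ⊗ ⋯ ⊗ Pₙ` on two copies of `n` qubits, where `Pᵢ` is the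
projector onto the symmetric subspace of the two copies of qubit `i`. -/
def bigSymProj (n : ℕ) :
    Matrix ((Fin n → Fin 2) × (Fin n → Fin 2)) ((Fin n → Fin 2) × (Fin n → Fin 2)) ℂ :=
  Matrix.of fun p q => ∏ i, symProj (p.1 i, p.2 i) (q.1 i, q.2 i)

/-- Two copies `|ψ⟩^⊗2` of an `n`-qubit state. -/
def twoCopies {n : ℕ} (ψ : (Fin n → Fin 2) → ℂ) :
    ((Fin n → Fin 2) × (Fin n → Fin 2)) → ℂ := fun p => ψ p.1 * ψ p.2

/-- Multipartite concurrence `C(ψ) = 2√(1 - ⟨ψ|^⊗2 P₁⊗⋯⊗Pₙ |ψ⟩^⊗2)`. -/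
def concurrence {n : ℕ} (ψ : (Fin n → Fin 2) → ℂ) : ℝ :=
  2 * Real.sqrt (1 - (star (twoCopies ψ) ⬝ᵥ (bigSymProj n).mulVec (twoCopies ψ)).re)

/-! `P = P₁ ⊗ ⋯ ⊗ Pₙ` is an orthogonal projection fixing `|0ⁿ⟩^⊗2`, so by Cauchy–Schwarz
`⟨ψ|^⊗2 P |ψ⟩^⊗2 ≥ |⟨0ⁿ|ψ⟩²|² = (1 - ε²)²`. Hence `C(ψ)² ≤ 4(1 - (1 - ε²)²) ≤ 8ε²`, which is at
most `32nε` because `ε ≤ 1 ≤ n`; when `n = 0` the normalisation of `ψ` forces `ε = 0`. -/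

theorem norm_star_dotProduct_sq_le {ι : Type*} [Fintype ι] (x y : ι → ℂ) :
    ‖star x ⬝ᵥ y‖ ^ 2 ≤ (star x ⬝ᵥ x).re * (star y ⬝ᵥ y).re := by
  have h := inner_mul_inner_self_le (𝕜 := ℂ) (WithLp.toLp 2 x) (WithLp.toLp 2 y)
  simp only [EuclideanSpace.inner_toLp_toLp, dotProduct_comm _ (star _)] at h
  rw [Matrix.star_dotProduct y x, norm_star, ← sq] at h
  exact h

theorem norm_star_dotProduct_sq_le_of_isStarProjection {ι : Type*} [Fintype ι]
    {Q : Matrix ι ι ℂ} (hQ : IsStarProjection Q) {w : ι → ℂ} (hw : Q *ᵥ w = w) (v : ι → ℂ) :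
    ‖star w ⬝ᵥ v‖ ^ 2 ≤ (star w ⬝ᵥ w).re * (star v ⬝ᵥ Q *ᵥ v).re := by
  have hQh : Qᴴ = Q := hQ.isSelfAdjoint
  have hadj : ∀ x y : ι → ℂ, star x ⬝ᵥ Q *ᵥ y = star (Q *ᵥ x) ⬝ᵥ y := fun x y => by
    rw [Matrix.star_mulVec, hQh, Matrix.dotProduct_mulVec]
  have hwv : star w ⬝ᵥ v = star w ⬝ᵥ Q *ᵥ v := by rw [hadj, hw]
  have hvv : star v ⬝ᵥ Q *ᵥ v = star (Q *ᵥ v) ⬝ᵥ Q *ᵥ v := by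
    rw [hadj, hadj (Q *ᵥ v), Matrix.mulVec_mulVec, hQ.isIdempotentElem.eq]
  rw [hwv, hvv]
  exact norm_star_dotProduct_sq_le w (Q *ᵥ v)

namespace Matrix

variable {ι κ R : Type*} [Fintype ι] [CommSemiring R]

variable (ι) in
def tensorPow (A : Matrix κ κ R) : Matrix (ι → κ) (ι → κ) R :=
  of fun p q => ∏ i, A (p i) (q i)

theorem conjTranspose_tensorPow [StarRing R] (A : Matrix κ κ R) :
    (tensorPow ι A)ᴴ = tensorPow ι Aᴴ := by
  ext p q
  simp [tensorPow, star_prod]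

theorem tensorPow_mul [DecidableEq ι] [Fintype κ] (A B : Matrix κ κ R) :
    tensorPow ι A * tensorPow ι B = tensorPow ι (A * B) := by
  ext p q
  simp only [tensorPow, mul_apply, of_apply, Finset.prod_univ_sum, ← Finset.prod_mul_distrib,
    Fintype.piFinset_univ]

theorem _root_.IsStarProjection.tensorPow [DecidableEq ι] [Fintype κ] [StarRing R]
    {A : Matrix κ κ R} (hA : IsStarProjection A) : IsStarProjection (tensorPow ι A) where
  isIdempotentElem := by
    rw [IsIdempotentElem, tensorPow_mul, hA.isIdempotentElem.eq]
  isSelfAdjoint := by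
    rw [IsSelfAdjoint, star_eq_conjTranspose, conjTranspose_tensorPow,
      ← star_eq_conjTranspose, hA.isSelfAdjoint.star_eq]

theorem _root_.IsStarProjection.submatrix_equiv [StarRing R] {m n : Type*} [Fintype m]
    [Fintype n] {A : Matrix n n R} (hA : IsStarProjection A) (e : m ≃ n) :
    IsStarProjection (A.submatrix e e) where
  isIdempotentElem := by
    rw [IsIdempotentElem, submatrix_mul_equiv, hA.isIdempotentElem.eq]
  isSelfAdjoint := by
    rw [IsSelfAdjoint, star_eq_conjTranspose, conjTranspose_submatrix,
      ← star_eq_conjTranspose, hA.isSelfAdjoint.star_eq]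

end Matrix

theorem isStarProjection_symProj : IsStarProjection symProj where
  isIdempotentElem := by
    ext ⟨a, b⟩ ⟨c, d⟩
    simp only [symProj, mul_apply, of_apply, Fintype.sum_prod_type, Fin.sum_univ_two]
    fin_cases a <;> fin_cases b <;> fin_cases c <;> fin_cases d <;> norm_num
  isSelfAdjoint := by
    ext ⟨a, b⟩ ⟨c, d⟩
    simp only [star_eq_conjTranspose, conjTranspose_apply, symProj, of_apply]
    fin_cases a <;> fin_cases b <;> fin_cases c <;> fin_cases d <;> norm_num

theorem bigSymProj_eq_submatrix (n : ℕ) :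
    bigSymProj n = (tensorPow (Fin n) symProj).submatrix
      (Equiv.arrowProdEquivProdArrow _ _ _).symm (Equiv.arrowProdEquivProdArrow _ _ _).symm := by
  ext p q
  rfl

theorem isStarProjection_bigSymProj (n : ℕ) : IsStarProjection (bigSymProj n) := by
  rw [bigSymProj_eq_submatrix]
  exact isStarProjection_symProj.tensorPow.submatrix_equiv _

theorem symProj_apply_zero (a b : Fin 2) :
    symProj (a, b) (0, 0) = if a = 0 ∧ b = 0 then 1 else 0 := by
  fin_cases a <;> fin_cases b <;> norm_num [symProj]

theorem bigSymProj_mulVec_single_zero (n : ℕ) :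
    bigSymProj n *ᵥ Pi.single 0 1 = Pi.single 0 1 := by
  ext ⟨x, y⟩
  simp only [mulVec_single_one, col_apply, bigSymProj, of_apply, Prod.fst_zero, Prod.snd_zero,
    Pi.zero_apply, symProj_apply_zero, Finset.prod_boole]
  simp [Pi.single_apply, funext_iff, forall_and]

theorem norm_pow_four_le_bigSymProj_expectation {n : ℕ} (ψ : (Fin n → Fin 2) → ℂ) :
    ‖ψ 0‖ ^ 4 ≤ (star (twoCopies ψ) ⬝ᵥ bigSymProj n *ᵥ twoCopies ψ).re := by
  have h := norm_star_dotProduct_sq_le_of_isStarProjection (isStarProjection_bigSymProj n)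
    (bigSymProj_mulVec_single_zero n) (twoCopies ψ)
  simpa [Pi.single_star, single_dotProduct, twoCopies, ← sq, ← pow_mul] using h

theorem concurrence_sq_le {n : ℕ} (ψ : (Fin n → Fin 2) → ℂ) (hψ : ‖ψ 0‖ ≤ 1) :
    concurrence ψ ^ 2 ≤ 4 * (1 - ‖ψ 0‖ ^ 4) := by
  rw [concurrence, mul_pow, Real.sq_sqrt']
  have h := norm_pow_four_le_bigSymProj_expectation ψ
  have h4 : ‖ψ 0‖ ^ 4 ≤ 1 := pow_le_one₀ (norm_nonneg _) hψ
  have hmax := max_le (sub_le_sub_left h 1) (sub_nonneg.mpr h4)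
  linarith

/-- If `|⟨ψ|0ⁿ⟩|² = 1 - ε²` then `C(ψ)² ≤ 16·(2n)·ε`. -/
theorem stmt_17 (n : ℕ) (ψ : (Fin n → Fin 2) → ℂ) (hψ : ∑ x, ‖ψ x‖ ^ 2 = 1)
    (ε : ℝ) (hε : ε ∈ Set.Icc (0 : ℝ) 1)
    (hov : ‖star ψ ⬝ᵥ (fun x : Fin n → Fin 2 => if x = (fun _ => 0) then 1 else 0)‖ ^ 2
      = 1 - ε ^ 2) :
    concurrence ψ ^ 2 ≤ 16 * (2 * n) * ε := by
  obtain ⟨hε0, hε1⟩ := hε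
  have hfid : ‖ψ 0‖ ^ 2 = 1 - ε ^ 2 := by
    have hket : (fun x : Fin n → Fin 2 => if x = (fun _ => 0) then (1 : ℂ) else 0) =
        Pi.single 0 1 := by
      ext x
      rw [Pi.single_apply]
      rfl
    rwa [hket, dotProduct_single, mul_one, Pi.star_apply, norm_star] at hov
  have hC : concurrence ψ ^ 2 ≤ 8 * ε ^ 2 := by
    have hle : ‖ψ 0‖ ≤ 1 := by nlinarith [norm_nonneg (ψ 0)]
    have h := concurrence_sq_le ψ hle
    nlinarith
  rcases n.eq_zero_or_pos with rfl | hn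
  · have hunit : ‖ψ 0‖ ^ 2 = 1 := by
      rwa [Fintype.sum_subsingleton _ 0] at hψ
    push_cast
    nlinarith
  · have hn1 : (1 : ℝ) ≤ n := by exact_mod_cast hn
    nlinarith
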